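/- Concatenation closure of balanced traces: if ⟨σ, s1, π⟩ →* ⟨σ', skip, π⟩ and ⟨σ', s2, π⟩ →* ⟨σ'', skip, π⟩ are balanced derivations in the stack-based small-step semantics, then ⟨σ, s1 s2, π⟩ →* ⟨σ'', skip, π⟩ is also a balanced derivation. -/
import Mathlib


/-- Janus reversible assignment operators: `+=`, `-=`, `^=`. -/
inductive Op where
  | add | sub | xor
deriving DecidableEq

/-- The operator inverter `I_op`. -/
def Op.inv : Op → Op
  | .add => .sub
  | .sub => .add
  | .xor => .xor

/-- Interpretation of the operators on integers. -/
def Op.apply : Op → Int → Int → Int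
  | .add, a, b => a + b
  | .sub, a, b => a - b
  | .xor, a, b => Int.xor a b

/-- Storage locations: plain variables and indexed array cells. -/
inductive Loc where
  | var (x : String)
  | arr (x : String) (i : Int)
deriving DecidableEq

/-- A store maps variable names and indexed variable names to values. -/
def Store := Loc → Int

def Store.update (σ : Store) (l : Loc) (v : Int) : Store :=
  fun l' => if l' = l then v else σ l'

/-- The empty store maps every variable to zero. -/
def emptyStore : Store := fun _ => 0

/-- Janus expressions. Binary operators are modelled by their interpretation. -/
inductive Expr where
  | const (c : Int)
  | var (x : String)
  | arr (x : String) (e : Expr)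
  | bop (f : Int → Int → Int) (e1 e2 : Expr)

/-- Evaluation of expressions (a deterministic function of the store). -/
def Expr.eval (σ : Store) : Expr → Int
  | .const c => c
  | .var x => σ (.var x)
  | .arr x e => σ (.arr x (Expr.eval σ e))
  | .bop f e1 e2 => f (Expr.eval σ e1) (Expr.eval σ e2)
/-- Janus statements. -/
inductive Stmt where
  | assign (x : String) (op : Op) (e : Expr)
  | assignArr (x : String) (ei : Expr) (op : Op) (e : Expr)
  | cond (e1 : Expr) (s1 s2 : Stmt) (e2 : Expr)
  | loop (e1 : Expr) (s1 s2 : Stmt) (e2 : Expr)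
  | call (id : String)
  | uncall (id : String)
  | skip
  | seq (s1 s2 : Stmt)

/-- The Janus statement inverter `I`. -/
def Stmt.inv : Stmt → Stmt
  | .assign x op e => .assign x op.inv e
  | .assignArr x ei op e => .assignArr x ei op.inv e
  | .cond e1 s1 s2 e2 => .cond e2 s1.inv s2.inv e1
  | .loop e1 s1 s2 e2 => .loop e2 s1.inv s2.inv e1
  | .call id => .uncall id
  | .uncall id => .call id
  | .skip => .skip
  | .seq s1 s2 => .seq s2.inv s1.inv
/-- Stack elements of the stack-based small-step semantics. -/
inductive Frame where
  | seq (s : Stmt)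
  | ifTrue (e : Expr)
  | ifFalse (e : Expr)
  | loop1 (e1 : Expr) (s1 s2 : Stmt) (e2 : Expr)
  | loop2 (e1 : Expr) (s1 s2 : Stmt) (e2 : Expr)

/-- Configurations `⟨σ, s, π⟩` of the stack-based small-step semantics. -/
structure Config where
  store : Store
  stmt : Stmt
  stack : List Frame

/-- The stack-based small-step semantics of Janus. -/
inductive Step (Γ : String → Stmt) : Config → Config → Prop where
  | assVar {σ : Store} {x : String} {op : Op} {e : Expr} {π : List Frame} :
      Step Γ ⟨σ, .assign x op e, π⟩
        ⟨σ.update (.var x) (op.apply (σ (.var x)) (e.eval σ)), .skip, π⟩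
  | assArr {σ : Store} {x : String} {ei e : Expr} {op : Op} {π : List Frame} :
      Step Γ ⟨σ, .assignArr x ei op e, π⟩
        ⟨σ.update (.arr x (ei.eval σ)) (op.apply (σ (.arr x (ei.eval σ))) (e.eval σ)), .skip, π⟩
  | call {σ : Store} {id : String} {π : List Frame} :
      Step Γ ⟨σ, .call id, π⟩ ⟨σ, Γ id, π⟩
  | uncall {σ : Store} {id : String} {π : List Frame} :
      Step Γ ⟨σ, .uncall id, π⟩ ⟨σ, (Γ id).inv, π⟩
  | seq1 {σ : Store} {s1 s2 : Stmt} {π : List Frame} :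
      Step Γ ⟨σ, .seq s1 s2, π⟩ ⟨σ, s1, .seq s2 :: π⟩
  | seq2 {σ : Store} {s2 : Stmt} {π : List Frame} :
      Step Γ ⟨σ, .skip, .seq s2 :: π⟩ ⟨σ, s2, π⟩
  | ifTrue1 {σ : Store} {e1 e2 : Expr} {s1 s2 : Stmt} {π : List Frame} :
      e1.eval σ ≠ 0 →
      Step Γ ⟨σ, .cond e1 s1 s2 e2, π⟩ ⟨σ, s1, .ifTrue e2 :: π⟩
  | ifTrue2 {σ : Store} {e2 : Expr} {π : List Frame} :
      e2.eval σ ≠ 0 →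
      Step Γ ⟨σ, .skip, .ifTrue e2 :: π⟩ ⟨σ, .skip, π⟩
  | ifFalse1 {σ : Store} {e1 e2 : Expr} {s1 s2 : Stmt} {π : List Frame} :
      e1.eval σ = 0 →
      Step Γ ⟨σ, .cond e1 s1 s2 e2, π⟩ ⟨σ, s2, .ifFalse e2 :: π⟩
  | ifFalse2 {σ : Store} {e2 : Expr} {π : List Frame} :
      e2.eval σ = 0 →
      Step Γ ⟨σ, .skip, .ifFalse e2 :: π⟩ ⟨σ, .skip, π⟩
  | loopMain {σ : Store} {e1 e2 : Expr} {s1 s2 : Stmt} {π : List Frame} :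
      e1.eval σ ≠ 0 →
      Step Γ ⟨σ, .loop e1 s1 s2 e2, π⟩ ⟨σ, s1, .loop1 e1 s1 s2 e2 :: π⟩
  | loopBase {σ : Store} {e1 e2 : Expr} {s1 s2 : Stmt} {π : List Frame} :
      e2.eval σ ≠ 0 →
      Step Γ ⟨σ, .skip, .loop1 e1 s1 s2 e2 :: π⟩ ⟨σ, .skip, π⟩
  | loop1 {σ : Store} {e1 e2 : Expr} {s1 s2 : Stmt} {π : List Frame} :
      e2.eval σ = 0 →
      Step Γ ⟨σ, .skip, .loop1 e1 s1 s2 e2 :: π⟩ ⟨σ, s2, .loop2 e1 s1 s2 e2 :: π⟩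
  | loop2 {σ : Store} {e1 e2 : Expr} {s1 s2 : Stmt} {π : List Frame} :
      e1.eval σ = 0 →
      Step Γ ⟨σ, .skip, .loop2 e1 s1 s2 e2 :: π⟩ ⟨σ, s1, .loop1 e1 s1 s2 e2 :: π⟩
/-- `PathP R P c c'` : there is an `R`-derivation from `c` to `c'` all of whose
configurations except possibly the last one satisfy the invariant `P`
(used to express *balanced* and *loop* derivations via conditions on the
intermediate stacks). -/
inductive PathP (R : Config → Config → Prop) (P : Config → Prop) : Config → Config → Prop where
  | refl (c : Config) : PathP R P c c
  | head {c c' c'' : Config} : P c → R c c' → PathP R P c' c'' → PathP R P c c''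

private lemma cancel_right {τ τ' π : List Frame} (h : τ ++ π = τ' ++ π) : τ = τ' :=
  List.append_cancel_right h

private lemma push_eq {f : Frame} {τ τ' π : List Frame}
    (h : f :: (τ ++ π) = τ' ++ π) : τ' = f :: τ := by
  have : (f :: τ) ++ π = τ' ++ π := by simpa using h
  exact (cancel_right this).symm

private lemma pop_eq {f : Frame} {τ τ' π : List Frame}
    (h : τ ++ π = f :: (τ' ++ π)) : τ = f :: τ' := by
  cases τ with
  | nil =>
    exfalso
    have := congrArg List.length h
    simp at this
    omega
  | cons g τ₁ =>
    simp at h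
    obtain ⟨h1, h2⟩ := h
    rw [h1, h2]

private lemma step_lift {Γ : String → Stmt} {π : List Frame}
    {σ σ₂ : Store} {s s₂ : Stmt} {τ τ₂ : List Frame} {π₂ : List Frame}
    (h : Step Γ ⟨σ, s, τ ++ π⟩ ⟨σ₂, s₂, π₂⟩) (hπ₂ : π₂ = τ₂ ++ π) (ρ : List Frame) :
    Step Γ ⟨σ, s, τ ++ ρ⟩ ⟨σ₂, s₂, τ₂ ++ ρ⟩ := by
  generalize hc : (⟨σ, s, τ ++ π⟩ : Config) = c at h
  generalize hc' : (⟨σ₂, s₂, π₂⟩ : Config) = c' at h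
  induction h with
  | assVar =>
      obtain ⟨rfl, rfl, h3⟩ := Config.mk.injEq .. ▸ hc
      obtain ⟨rfl, rfl, h3'⟩ := Config.mk.injEq .. ▸ hc'
      rw [cancel_right ((h3.trans h3'.symm).trans hπ₂)]
      exact .assVar
  | assArr =>
      obtain ⟨rfl, rfl, h3⟩ := Config.mk.injEq .. ▸ hc
      obtain ⟨rfl, rfl, h3'⟩ := Config.mk.injEq .. ▸ hc'
      rw [cancel_right ((h3.trans h3'.symm).trans hπ₂)]
      exact .assArr
  | call =>
      obtain ⟨rfl, rfl, h3⟩ := Config.mk.injEq .. ▸ hc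
      obtain ⟨rfl, rfl, h3'⟩ := Config.mk.injEq .. ▸ hc'
      rw [cancel_right ((h3.trans h3'.symm).trans hπ₂)]
      exact .call
  | uncall =>
      obtain ⟨rfl, rfl, h3⟩ := Config.mk.injEq .. ▸ hc
      obtain ⟨rfl, rfl, h3'⟩ := Config.mk.injEq .. ▸ hc'
      rw [cancel_right ((h3.trans h3'.symm).trans hπ₂)]
      exact .uncall
  | seq1 =>
      obtain ⟨rfl, rfl, h3⟩ := Config.mk.injEq .. ▸ hc
      obtain ⟨rfl, rfl, h3'⟩ := Config.mk.injEq .. ▸ hc'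
      rw [← h3] at h3'
      rw [push_eq (h3'.symm.trans hπ₂)]
      exact .seq1
  | seq2 =>
      obtain ⟨rfl, rfl, h3⟩ := Config.mk.injEq .. ▸ hc
      obtain ⟨rfl, rfl, h3'⟩ := Config.mk.injEq .. ▸ hc'
      rw [h3'.symm.trans hπ₂] at h3
      rw [pop_eq h3]
      exact .seq2
  | ifTrue1 he =>
      obtain ⟨rfl, rfl, h3⟩ := Config.mk.injEq .. ▸ hc
      obtain ⟨rfl, rfl, h3'⟩ := Config.mk.injEq .. ▸ hc'
      rw [← h3] at h3'
      rw [push_eq (h3'.symm.trans hπ₂)]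
      exact .ifTrue1 he
  | ifTrue2 he =>
      obtain ⟨rfl, rfl, h3⟩ := Config.mk.injEq .. ▸ hc
      obtain ⟨rfl, rfl, h3'⟩ := Config.mk.injEq .. ▸ hc'
      rw [h3'.symm.trans hπ₂] at h3
      rw [pop_eq h3]
      exact .ifTrue2 he
  | ifFalse1 he =>
      obtain ⟨rfl, rfl, h3⟩ := Config.mk.injEq .. ▸ hc
      obtain ⟨rfl, rfl, h3'⟩ := Config.mk.injEq .. ▸ hc'
      rw [← h3] at h3'
      rw [push_eq (h3'.symm.trans hπ₂)]
      exact .ifFalse1 he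
  | ifFalse2 he =>
      obtain ⟨rfl, rfl, h3⟩ := Config.mk.injEq .. ▸ hc
      obtain ⟨rfl, rfl, h3'⟩ := Config.mk.injEq .. ▸ hc'
      rw [h3'.symm.trans hπ₂] at h3
      rw [pop_eq h3]
      exact .ifFalse2 he
  | loopMain he =>
      obtain ⟨rfl, rfl, h3⟩ := Config.mk.injEq .. ▸ hc
      obtain ⟨rfl, rfl, h3'⟩ := Config.mk.injEq .. ▸ hc'
      rw [← h3] at h3'
      rw [push_eq (h3'.symm.trans hπ₂)]
      exact .loopMain he
  | loopBase he =>
      obtain ⟨rfl, rfl, h3⟩ := Config.mk.injEq .. ▸ hc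
      obtain ⟨rfl, rfl, h3'⟩ := Config.mk.injEq .. ▸ hc'
      rw [h3'.symm.trans hπ₂] at h3
      rw [pop_eq h3]
      exact .loopBase he
  | loop1 he =>
      obtain ⟨rfl, rfl, h3⟩ := Config.mk.injEq .. ▸ hc
      obtain ⟨rfl, rfl, h3'⟩ := Config.mk.injEq .. ▸ hc'
      have ht := h3'.symm.trans hπ₂
      cases τ₂ with
      | nil =>
        exfalso
        simp only [List.nil_append] at ht
        rw [← ht] at h3
        have hlen := congrArg List.length h3
        simp at hlen
        subst hlen
        simp at h3
      | cons f₂ τ₂' =>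
        simp only [List.cons_append] at ht
        injection ht with h4 h5
        rw [h5] at h3
        rw [pop_eq h3, ← h4]
        exact .loop1 he
  | loop2 he =>
      obtain ⟨rfl, rfl, h3⟩ := Config.mk.injEq .. ▸ hc
      obtain ⟨rfl, rfl, h3'⟩ := Config.mk.injEq .. ▸ hc'
      have ht := h3'.symm.trans hπ₂
      cases τ₂ with
      | nil =>
        exfalso
        simp only [List.nil_append] at ht
        rw [← ht] at h3
        have hlen := congrArg List.length h3
        simp at hlen
        subst hlen
        simp at h3
      | cons f₂ τ₂' =>
        simp only [List.cons_append] at ht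
        injection ht with h4 h5
        rw [h5] at h3
        rw [pop_eq h3, ← h4]
        exact .loop2 he


private lemma path_start_ext {R : Config → Config → Prop} {P : Config → Prop}
    {c c' : Config} (h : PathP R P c c') (h' : P c') : P c := by
  cases h with
  | refl => exact h'
  | head hp _ _ => exact hp

private lemma pathP_mono {R : Config → Config → Prop} {P Q : Config → Prop}
    {c c' : Config} (h : PathP R P c c') (hPQ : ∀ c, P c → Q c) :
    PathP R Q c c' := by
  induction h with
  | refl => exact .refl _
  | head hp hstep _ ih => exact .head (hPQ _ hp) hstep ih

private lemma pathP_trans {R : Config → Config → Prop} {P : Config → Prop}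
    {c c' c'' : Config} (h1 : PathP R P c c') (hP : P c') (h2 : PathP R P c' c'') :
    PathP R P c c'' := by
  induction h1 with
  | refl => exact h2
  | head hp hstep _ ih => exact .head hp hstep (ih hP h2)

private lemma path_lift {Γ : String → Stmt} {π : List Frame} {c c' : Config}
    (h : PathP (Step Γ) (fun c => ∃ τ, c.stack = τ ++ π) c c') :
    ∀ τ τ', c.stack = τ ++ π → c'.stack = τ' ++ π → ∀ ρ : List Frame,
      PathP (Step Γ) (fun c => ∃ τ, c.stack = τ ++ ρ)
        ⟨c.store, c.stmt, τ ++ ρ⟩ ⟨c'.store, c'.stmt, τ' ++ ρ⟩ := by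
  induction h with
  | refl c =>
      intro τ τ' hτ hτ' ρ
      rw [cancel_right (hτ.symm.trans hτ')]
      exact .refl _
  | head hp hstep hrest ih =>
      rename_i c₀ c₁ c₂
      intro τ τ' hτ hτ' ρ
      obtain ⟨τ₁, hτ₁⟩ := path_start_ext hrest ⟨τ', hτ'⟩
      obtain ⟨st, sm, sk⟩ := c₀
      obtain ⟨st₁, sm₁, sk₁⟩ := c₁
      simp only at hτ hτ₁
      subst hτ hτ₁
      exact .head ⟨τ, rfl⟩ (step_lift hstep rfl ρ) (ih τ₁ τ' rfl hτ' ρ)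

/-- Concatenation closure of balanced traces: if
`⟨σ, s1, π⟩ →* ⟨σ', skip, π⟩` and `⟨σ', s2, π⟩ →* ⟨σ'', skip, π⟩` are balanced
derivations, then so is `⟨σ, s1 s2, π⟩ →* ⟨σ'', skip, π⟩`. -/
theorem stmt14_balanced_concat (Γ : String → Stmt) (σ σ' σ'' : Store)
    (s1 s2 : Stmt) (π : List Frame)
    (h1 : PathP (Step Γ) (fun c => ∃ τ, c.stack = τ ++ π)
            ⟨σ, s1, π⟩ ⟨σ', .skip, π⟩)
    (h2 : PathP (Step Γ) (fun c => ∃ τ, c.stack = τ ++ π)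
            ⟨σ', s2, π⟩ ⟨σ'', .skip, π⟩) :
    PathP (Step Γ) (fun c => ∃ τ, c.stack = τ ++ π)
      ⟨σ, .seq s1 s2, π⟩ ⟨σ'', .skip, π⟩ := by
  refine .head ⟨[], rfl⟩ .seq1 ?_
  have A := path_lift h1 [] [] rfl rfl (Frame.seq s2 :: π)
  have A' : PathP (Step Γ) (fun c => ∃ τ, c.stack = τ ++ π)
      ⟨σ, s1, Frame.seq s2 :: π⟩ ⟨σ', .skip, Frame.seq s2 :: π⟩ := by
    refine pathP_mono A ?_
    rintro c ⟨τ, hc⟩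
    exact ⟨τ ++ [Frame.seq s2], by rw [hc]; simp⟩
  exact pathP_trans A' ⟨[Frame.seq s2], rfl⟩ (.head ⟨[Frame.seq s2], rfl⟩ .seq2 h2)
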